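/- Let σ be a stable modular tree whose tails are labeled bijectively by a finite set I, and let I = I_NS ∪ I_R be a partition such that the cardinality of I_R is even. Then there exists a unique coloring c : F_σ → {NS, R} of the flags of σ such that c∘j_σ = c, each tail labeled by an element of I_NS is colored NS and each tail labeled by an element of I_R is colored R, and every vertex of σ has an even number of adjacent flags of color R. Equivalently, there exists a unique stable (I_NS, I_R)-labeled SUSY tree τ whose underlying labeled modular tree is σ. -/

import Mathlib

inductive SColor : Type
  | NS : SColor
  | R : SColor
  deriving DecidableEq

instance : Fintype SColor :=
  ⟨{SColor.NS, SColor.R}, fun x => by cases x <;> simp⟩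

/-- A graph in the sense of Borisov–Manin: a finite set of flags, a finite set of
vertices, a boundary map and an involution on flags. -/
structure PreGraph where
  Flag : Type
  Vertex : Type
  [flagFintype : Fintype Flag]
  [flagDecEq : DecidableEq Flag]
  [vertexFintype : Fintype Vertex]
  [vertexDecEq : DecidableEq Vertex]
  bd : Flag → Vertex
  j : Flag → Flag
  j_invol : ∀ f, j (j f) = f

attribute [instance] PreGraph.flagFintype PreGraph.flagDecEq
attribute [instance] PreGraph.vertexFintype PreGraph.vertexDecEq

namespace PreGraph

variable (τ : PreGraph)

/-- Number of tails (fixed points of the involution). -/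
def numTails : ℕ := (Finset.univ.filter fun f => τ.j f = f).card

/-- Number of edges (two-element orbits of the involution). -/
def numEdges : ℕ := (Finset.univ.filter fun f => τ.j f ≠ f).card / 2

/-- Number of flags adjacent to a vertex. -/
def numFlagsAt (v : τ.Vertex) : ℕ := (Finset.univ.filter fun f => τ.bd f = v).card

/-- Connectedness of the geometric realization. -/
def Connected : Prop :=
  Nonempty τ.Vertex ∧ ∀ v w : τ.Vertex,
    Relation.ReflTransGen (fun a b => ∃ f, τ.bd f = a ∧ τ.bd (τ.j f) = b) v w

end PreGraph

/-- A modular graph: a graph with a genus labeling. -/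
structure ModGraph extends PreGraph where
  genus : Vertex → ℕ

namespace ModGraph

variable (τ : ModGraph)

/-- Stability: `2 g(v) - 2 + #F(v) > 0` at every vertex. -/
def Stable : Prop := ∀ v, 2 < 2 * τ.genus v + τ.numFlagsAt v

/-- A tree is a connected modular graph of genus zero, where the genus is
`Σ_v (g(v) - 1) + #E + 1`. -/
def IsTree : Prop :=
  τ.Connected ∧ (∑ v, ((τ.genus v : ℤ) - 1)) + (τ.numEdges : ℤ) + 1 = 0

end ModGraph

/-- A SUSY graph: a modular graph together with a coloring of the flags by
`NS`/`R`, constant on orbits of the involution, such that every vertex has an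
even number of adjacent `R`-flags. -/
structure SUSYGraph extends ModGraph where
  color : Flag → SColor
  color_j : ∀ f, color (j f) = color f
  even_R : ∀ v, Even ((Finset.univ.filter fun f => bd f = v ∧ color f = SColor.R).card)

namespace SUSYGraph

variable (τ : SUSYGraph)

def numFlagsAtC (v : τ.Vertex) (c : SColor) : ℕ :=
  (Finset.univ.filter fun f => τ.bd f = v ∧ τ.color f = c).card

def numFlagsC (c : SColor) : ℕ := (Finset.univ.filter fun f => τ.color f = c).card

def numTailsC (c : SColor) : ℕ :=
  (Finset.univ.filter fun f => τ.j f = f ∧ τ.color f = c).card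

def numEdgesC (c : SColor) : ℕ :=
  (Finset.univ.filter fun f => τ.j f ≠ f ∧ τ.color f = c).card / 2

end SUSYGraph

/-!
Identify `SColor` with `ZMod 2` (`R ↦ 1`). A coloring becomes a `j`-invariant function `x` on
flags, and the parity condition says that its boundary `∂x` (the sum of `x` over the flags at
each vertex) vanishes. Two solutions differ by an element of the edge space (`j`-invariant
functions vanishing on tails), and a solution exists iff `∂x₀ ∈ ∂(edge space)` for some `x₀`
with the prescribed tail values. By connectedness `∂(edge space)` contains every `δ_u + δ_w`,
hence every vector with coordinate sum zero; `∂x₀` is one because `#I_R` is even. The genus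
condition gives `#E ≤ #V - 1`, so `dim (edge space) ≤ #V - 1 ≤ dim ∂(edge space)`: `∂` is
injective on the edge space, which is uniqueness.
-/

namespace SColor

def toZMod : SColor → ZMod 2
  | NS => 0
  | R => 1

def equivZMod : SColor ≃ ZMod 2 where
  toFun := toZMod
  invFun x := if x = 0 then NS else R
  left_inv c := by cases c <;> rfl
  right_inv x := by fin_cases x <;> rfl

lemma sum_toZMod_eq_zero_iff {α : Type*} (s : Finset α) (c : α → SColor) :
    ∑ x ∈ s, (c x).toZMod = 0 ↔ Even (s.filter fun x => c x = R).card := by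
  have hind : ∀ x, (c x).toZMod = if c x = R then 1 else 0 := fun x => by
    cases c x <;> rfl
  simp only [hind, Finset.sum_boole, ZMod.natCast_eq_zero_iff_even]

end SColor

lemma Function.Involutive.card_filter_ne_eq_two_mul {α β : Type*} [Fintype α] [DecidableEq α]
    [LinearOrder β] {j : α → α} (hj : Function.Involutive j) {r : α → β}
    (hr : Function.Injective r) :
    (Finset.univ.filter fun x => j x ≠ x).card
      = 2 * (Finset.univ.filter fun x => r x < r (j x)).card := by
  have hsplit : (Finset.univ.filter fun x => j x ≠ x)
      = (Finset.univ.filter fun x => r x < r (j x)) ∪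
          Finset.univ.filter fun x => r (j x) < r x := by
    ext x
    simp only [Finset.mem_filter, Finset.mem_univ, true_and, Finset.mem_union,
      ← hr.ne_iff, ne_comm (a := r (j x)), lt_or_lt_iff_ne]
  have hswap : (Finset.univ.filter fun x => r (j x) < r x).card
      = (Finset.univ.filter fun x => r x < r (j x)).card :=
    Finset.card_equiv hj.toPerm fun x => by simp [hj x]
  rw [hsplit, Finset.card_union_of_disjoint (Finset.disjoint_filter.2 fun x _ h => h.not_gt),
    hswap, two_mul]

namespace PreGraph

variable (τ : PreGraph)

lemma j_involutive : Function.Involutive τ.j := τ.j_invol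

def boundary : (τ.Flag → ZMod 2) →ₗ[ZMod 2] (τ.Vertex → ZMod 2) where
  toFun x v := ∑ f ∈ Finset.univ.filter (τ.bd · = v), x f
  map_add' x y := by ext v; simp [Finset.sum_add_distrib]
  map_smul' a x := by ext v; simp [Finset.mul_sum]

lemma boundary_apply (x : τ.Flag → ZMod 2) (v : τ.Vertex) :
    τ.boundary x v = ∑ f ∈ Finset.univ.filter (τ.bd · = v), x f := rfl

lemma sum_boundary (x : τ.Flag → ZMod 2) : ∑ v, τ.boundary x v = ∑ f, x f :=
  Finset.sum_fiberwise _ _ _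

lemma boundary_toZMod_comp_eq_zero_iff (c : τ.Flag → SColor) :
    τ.boundary (SColor.toZMod ∘ c) = 0 ↔
      ∀ v, Even ((Finset.univ.filter fun f => τ.bd f = v ∧ c f = SColor.R).card) := by
  rw [funext_iff]
  refine forall_congr' fun v => ?_
  rw [boundary_apply, Pi.zero_apply, ← Finset.filter_filter]
  exact SColor.sum_toZMod_eq_zero_iff _ c

lemma boundary_single (f : τ.Flag) : τ.boundary (Pi.single f 1) = Pi.single (τ.bd f) 1 := by
  ext v
  simp [boundary_apply, Pi.single_apply, eq_comm]

def edgeSpace : Submodule (ZMod 2) (τ.Flag → ZMod 2) where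
  carrier := {x | (∀ f, x (τ.j f) = x f) ∧ ∀ f, τ.j f = f → x f = 0}
  add_mem' hx hy :=
    ⟨fun f => by simp [hx.1 f, hy.1 f], fun f hf => by simp [hx.2 f hf, hy.2 f hf]⟩
  zero_mem' := ⟨fun _ => rfl, fun _ _ => rfl⟩
  smul_mem' a x hx := ⟨fun f => by simp [hx.1 f], fun f hf => by simp [hx.2 f hf]⟩

lemma single_add_single_j_mem_edgeSpace (f : τ.Flag) :
    Pi.single f 1 + Pi.single (τ.j f) 1 ∈ τ.edgeSpace := by
  have hj : ∀ g, τ.j g = f ↔ g = τ.j f := fun g => τ.j_involutive.eq_iff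
  refine ⟨fun g => ?_, fun g hg => ?_⟩
  · simp only [Pi.add_apply, Pi.single_apply, hj, τ.j_involutive.injective.eq_iff]
    exact add_comm _ _
  · have hgf : g = τ.j f ↔ g = f := by rw [← hj, hg]
    simp only [Pi.add_apply, Pi.single_apply, hgf, ZModModule.add_self]

/-- An edge-space vector is determined by its values on the flags `f` with `r f < r (j f)`,
one flag of each edge. -/
lemma finrank_edgeSpace_le : Module.finrank (ZMod 2) τ.edgeSpace ≤ τ.numEdges := by
  let r := Fintype.equivFin τ.Flag
  let S := Finset.univ.filter fun f => r f < r (τ.j f)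
  let res := (LinearMap.funLeft (ZMod 2) (ZMod 2) ((↑) : S → τ.Flag)).comp τ.edgeSpace.subtype
  have hres : Function.Injective res := by
    rw [← LinearMap.ker_eq_bot, Submodule.eq_bot_iff]
    rintro ⟨x, hxj, hxt⟩ hx0
    have hS : ∀ f, r f < r (τ.j f) → x f = 0 :=
      fun f hf => congrFun hx0 ⟨f, by simpa [S] using hf⟩
    refine Subtype.ext (funext fun f => ?_)
    change x f = 0
    rcases lt_trichotomy (r f) (r (τ.j f)) with h | h | h
    · exact hS f h
    · exact hxt f (r.injective h).symm
    · rw [← hxj f]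
      exact hS _ (by rwa [τ.j_invol])
  calc Module.finrank (ZMod 2) τ.edgeSpace ≤ Module.finrank (ZMod 2) (S → ZMod 2) :=
        LinearMap.finrank_le_finrank_of_injective hres
    _ = τ.numEdges := by
      rw [Module.finrank_fintype_fun_eq_card, Fintype.card_coe, numEdges,
        τ.j_involutive.card_filter_ne_eq_two_mul r.injective, Nat.mul_div_cancel_left _ two_pos]

lemma single_add_single_mem_map_boundary {u w : τ.Vertex}
    (huw : Relation.ReflTransGen (fun a b => ∃ f, τ.bd f = a ∧ τ.bd (τ.j f) = b) u w) :
    Pi.single u 1 + Pi.single w 1 ∈ τ.edgeSpace.map τ.boundary := by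
  induction huw with
  | refl => simp [ZModModule.add_self]
  | tail _ step ih =>
    obtain ⟨f, rfl, rfl⟩ := step
    have hstep := add_mem ih ⟨_, τ.single_add_single_j_mem_edgeSpace f, rfl⟩
    rwa [map_add, boundary_single, boundary_single, ZModModule.add_add_add_cancel] at hstep

lemma ker_sum_le_map_boundary (hconn : τ.Connected) :
    LinearMap.ker (∑ v, LinearMap.proj v : (τ.Vertex → ZMod 2) →ₗ[ZMod 2] ZMod 2)
      ≤ τ.edgeSpace.map τ.boundary := by
  intro b hb
  obtain ⟨v₀⟩ := hconn.1
  have hb' : b = ∑ v, b v • (Pi.single v 1 + Pi.single v₀ 1) := by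
    simp only [LinearMap.mem_ker, LinearMap.coe_sum, LinearMap.coe_proj, Finset.sum_apply,
      Function.eval] at hb
    simp only [smul_add, Finset.sum_add_distrib, ← Finset.sum_smul, hb, zero_smul, add_zero]
    simp_rw [← Pi.single_smul', smul_eq_mul, mul_one, Finset.univ_sum_single]
  rw [hb']
  exact Submodule.sum_mem _ fun v _ =>
    Submodule.smul_mem _ _ (τ.single_add_single_mem_map_boundary (hconn.2 v v₀))

lemma disjoint_edgeSpace_ker_boundary (hconn : τ.Connected)
    (hE : τ.numEdges + 1 ≤ Fintype.card τ.Vertex) :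
    Disjoint τ.edgeSpace (LinearMap.ker τ.boundary) := by
  let D := τ.boundary.domRestrict τ.edgeSpace
  let s : (τ.Vertex → ZMod 2) →ₗ[ZMod 2] ZMod 2 := ∑ v, LinearMap.proj v
  have hs : Fintype.card τ.Vertex ≤ Module.finrank (ZMod 2) (LinearMap.ker s) + 1 := by
    have hrk := s.finrank_range_add_finrank_ker
    have hle := Submodule.finrank_le (LinearMap.range s)
    rw [Module.finrank_fintype_fun_eq_card] at hrk
    rw [Module.finrank_self] at hle
    omega
  have hrange : Module.finrank (ZMod 2) (LinearMap.ker s)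
      ≤ Module.finrank (ZMod 2) (LinearMap.range D) := by
    rw [LinearMap.range_domRestrict]
    exact Submodule.finrank_mono (τ.ker_sum_le_map_boundary hconn)
  have hker : Module.finrank (ZMod 2) (LinearMap.ker D) = 0 := by
    have hrk := D.finrank_range_add_finrank_ker
    have hdim := τ.finrank_edgeSpace_le
    omega
  rw [Submodule.finrank_eq_zero] at hker
  rw [Submodule.disjoint_def]
  intro x hx hx0
  have hxD : (⟨x, hx⟩ : τ.edgeSpace) ∈ LinearMap.ker D := hx0
  rw [hker] at hxD
  simpa using hxD

lemma exists_invariant_extension {I : Type*} [Fintype I] (l : I → τ.Flag)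
    (hl_tail : ∀ i, τ.j (l i) = l i) (hl_inj : Function.Injective l) (a : I → ZMod 2) :
    ∃ x : τ.Flag → ZMod 2, (∀ f, x (τ.j f) = x f) ∧ (∀ i, x (l i) = a i) ∧
      ∑ f, x f = ∑ i, a i := by
  have hjl : ∀ f i, τ.j f = l i ↔ f = l i := fun f i => by
    rw [τ.j_involutive.eq_iff, hl_tail]
  refine ⟨∑ i, Pi.single (l i) (a i), fun f => ?_, fun k => ?_, ?_⟩
  · simp only [Finset.sum_apply, Pi.single_apply, hjl]
  · rw [Finset.sum_apply, Finset.sum_eq_single k (fun i _ hik => Pi.single_eq_of_ne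
      (hl_inj.ne hik.symm) _) (by simp), Pi.single_eq_same]
  · simp only [Finset.sum_apply]
    rw [Finset.sum_comm]
    simp [Finset.sum_pi_single']

theorem existsUnique_boundary_eq_zero (hconn : τ.Connected)
    (hE : τ.numEdges + 1 ≤ Fintype.card τ.Vertex) {I : Type*} [Fintype I] (l : I → τ.Flag)
    (hl_tail : ∀ i, τ.j (l i) = l i) (hl_inj : Function.Injective l)
    (hl_surj : ∀ f, τ.j f = f → ∃ i, l i = f) (a : I → ZMod 2) (ha : ∑ i, a i = 0) :
    ∃! x : τ.Flag → ZMod 2,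
      (∀ f, x (τ.j f) = x f) ∧ (∀ i, x (l i) = a i) ∧ τ.boundary x = 0 := by
  obtain ⟨x₀, hx₀j, hx₀l, hx₀sum⟩ := τ.exists_invariant_extension l hl_tail hl_inj a
  obtain ⟨e, he, hbe⟩ : τ.boundary x₀ ∈ τ.edgeSpace.map τ.boundary :=
    τ.ker_sum_le_map_boundary hconn (by simp [sum_boundary, hx₀sum, ha])
  refine ⟨x₀ - e, ⟨fun f => by simp [hx₀j, he.1],
    fun i => by simp [hx₀l, he.2 _ (hl_tail i)], by simp [hbe]⟩, ?_⟩
  rintro y ⟨hyj, hyl, hy⟩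
  have hdiff : y - (x₀ - e) ∈ τ.edgeSpace := by
    refine ⟨fun f => by simp [hyj, hx₀j, he.1], fun f hf => ?_⟩
    obtain ⟨i, rfl⟩ := hl_surj f hf
    simp [hyl, hx₀l, he.2 _ (hl_tail i)]
  exact sub_eq_zero.1 <| Submodule.disjoint_def.1 (τ.disjoint_edgeSpace_ker_boundary hconn hE) _
    hdiff (by simp [hy, hbe])

end PreGraph

lemma ModGraph.IsTree.numEdges_add_one_le {σ : ModGraph} (h : σ.IsTree) :
    σ.numEdges + 1 ≤ Fintype.card σ.Vertex := by
  have hgenus : -(Fintype.card σ.Vertex : ℤ) ≤ ∑ v, ((σ.genus v : ℤ) - 1) := by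
    simpa using Finset.sum_le_sum fun v (_ : v ∈ Finset.univ) =>
      show (-1 : ℤ) ≤ σ.genus v - 1 by omega
  have := h.2
  omega

theorem ModGraph.exists_unique_SUSY_lift_general (σ : ModGraph)
    (htree : σ.IsTree)
    (I : Type) [Fintype I]
    (l : I → σ.Flag)
    (hl_tail : ∀ i, σ.j (l i) = l i)
    (hl_inj : Function.Injective l)
    (hl_surj : ∀ f, σ.j f = f → ∃ i, l i = f)
    (colI : I → SColor)
    (hIR_even : Even ((Finset.univ.filter fun i => colI i = SColor.R).card)) :
    ∃! c : σ.Flag → SColor,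
      (∀ f, c (σ.j f) = c f) ∧
      (∀ i, c (l i) = colI i) ∧
      (∀ v, Even ((Finset.univ.filter fun f =>
        σ.bd f = v ∧ c f = SColor.R).card)) := by
  have hI : ∑ i, (colI i).toZMod = 0 := (SColor.sum_toZMod_eq_zero_iff _ _).2 hIR_even
  refine (((Equiv.refl σ.Flag).arrowCongr SColor.equivZMod).existsUnique_congr fun c => ?_).2
    (σ.existsUnique_boundary_eq_zero htree.1 htree.numEdges_add_one_le l hl_tail hl_inj hl_surj
      _ hI)
  refine and_congr (forall_congr' fun f => ?_) (and_congr (forall_congr' fun i => ?_) ?_)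
  · exact SColor.equivZMod.injective.eq_iff.symm
  · exact SColor.equivZMod.injective.eq_iff.symm
  · exact (σ.boundary_toZMod_comp_eq_zero_iff c).symm

/-- Lemma 2.13 of the paper. Let `σ` be a stable modular tree whose
tails are labeled bijectively by a finite set `I`, and let `I = I_NS ∪ I_R` be a
partition (given by `colI : I → SColor`, with `I_R = colI⁻¹ R`) such that `#I_R` is
even.  Then there is a unique coloring `c` of the flags of `σ` which is constant on
orbits of the involution, colors the tail labeled by `i` with `colI i`, and gives
every vertex an even number of adjacent `R`-flags; i.e. there is a unique stable
`(I_NS, I_R)`-labeled SUSY tree lifting `σ`. -/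
theorem ModGraph.exists_unique_SUSY_lift (σ : ModGraph)
    (htree : σ.IsTree) (hstable : σ.Stable)
    (I : Type) [Fintype I] [DecidableEq I]
    (l : I → σ.Flag)
    (hl_tail : ∀ i, σ.j (l i) = l i)
    (hl_inj : Function.Injective l)
    (hl_surj : ∀ f, σ.j f = f → ∃ i, l i = f)
    (colI : I → SColor)
    (hIR_even : Even ((Finset.univ.filter fun i => colI i = SColor.R).card)) :
    ∃! c : σ.Flag → SColor,
      (∀ f, c (σ.j f) = c f) ∧
      (∀ i, c (l i) = colI i) ∧
      (∀ v, Even ((Finset.univ.filter fun f =>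
        σ.bd f = v ∧ c f = SColor.R).card)) :=
  ModGraph.exists_unique_SUSY_lift_general σ htree I l hl_tail hl_inj hl_surj colI hIR_even
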